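/- For the block-counting jump chain (X_i) started from n and any integers 2 ≤ a < b < n, the probability that no X_i lies in the interval [a,b] is at most ∑_{k=1}^{∞} P(V > b − a + k). Consequently, for every ε > 0 there is an integer r such that for all n and all intervals [a,b] ⊆ [2, n−1] with b − a ≥ r, the probability that the chain started from n visits no point of [a,b] is at most ε. -/

import Mathlib

open MeasureTheory
open scoped ENNReal Classical

noncomputable section

/-- The Euler Beta function `B(x,y) = Γ(x)Γ(y)/Γ(x+y)`. -/
def betaR (x y : ℝ) : ℝ := Real.Gamma x * Real.Gamma y / Real.Gamma (x + y)

/-- The coalescence rate `ρ_{m,m-k+1}` of the Beta(2-α,α)-coalescent. -/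
def collRate (α : ℝ) (m k : ℕ) : ℝ :=
  (1 / (Real.Gamma (2 - α) * Real.Gamma α)) * (m.choose k) *
    betaR ((k : ℝ) - α) ((m : ℝ) - (k : ℝ) + α)

/-- The merging rate `ρ_{m,l}` from `m` blocks to `l` blocks (here `l = m-k+1`,
i.e. `k = m-l+1` blocks merge into one). -/
def rateML (α : ℝ) (m l : ℕ) : ℝ := collRate α m (m - l + 1)

/-- The total merging rate `ρ_m = ∑_{l=1}^{m-1} ρ_{m,l}`. -/
def totalRate (α : ℝ) (m : ℕ) : ℝ := ∑ l ∈ Finset.Ico 1 m, rateML α m l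

/-- The jump probability `P_{m,l} = ρ_{m,l}/ρ_m`. -/
def jumpProb (α : ℝ) (m l : ℕ) : ℝ := rateML α m l / totalRate α m

/-- The probability mass function of `V`: `P(V = k) = (α/Γ(2-α)) Γ(k+1-α)/Γ(k+2)`, `k ≥ 1`. -/
def Vpmf (α : ℝ) (k : ℕ) : ℝ :=
  α / Real.Gamma (2 - α) * (Real.Gamma ((k : ℝ) + 1 - α) / Real.Gamma ((k : ℝ) + 2))

/-- The tail `P(V ≥ k)` of `V`. -/
def Vge (α : ℝ) (k : ℕ) : ℝ := ∑' j : ℕ, if k ≤ j ∧ 1 ≤ j then Vpmf α j else 0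

/-- The block-counting jump chain of the Beta(2-α,α)-coalescent started from `n`:
`X 0 = n` a.s., the chain is strictly decreasing until absorption at `1` (where it stays),
and given the whole past it jumps from `m > 1` to `l` with probability `P_{m,l}`. -/
structure IsJumpChain (α : ℝ) {Ω : Type*} [MeasurableSpace Ω] (μ : Measure Ω)
    (n : ℕ) (X : ℕ → Ω → ℕ) : Prop where
  meas : ∀ i, Measurable (X i)
  init : ∀ᵐ ω ∂μ, X 0 ω = n
  pos : ∀ᵐ ω ∂μ, ∀ i, 1 ≤ X i ω
  step : ∀ᵐ ω ∂μ, ∀ i, (1 < X i ω → X (i + 1) ω < X i ω) ∧ (X i ω = 1 → X (i + 1) ω = 1)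
  markov : ∀ (i : ℕ) (f : ℕ → ℕ), 1 < f i → ∀ l : ℕ,
    μ {ω | (∀ j ≤ i, X j ω = f j) ∧ X (i + 1) ω = l}
      = ENNReal.ofReal (jumpProb α (f i) l) * μ {ω | ∀ j ≤ i, X j ω = f j}

/-- The strict tail `P(V > k)` of `V`. -/
def Vgt (α : ℝ) (k : ℕ) : ℝ := Vge α (k + 1)

/-! With `g j = Γ(j+1-α)/Γ(j+1)` (`gammaRatio α j`) one has `P(V ≥ j) = g j / Γ(2-α)`, and the
rate of merging `i + 1` of `m` blocks factors as `R_i (g i - g (i+1))` with `R` nonincreasing in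
`i` (this is where `α ≥ 1` enters). Hence the chance that a jump from `m` blocks lands below `a`,
a tail of the `R`-reweighted law `g i - g (i+1)`, is at most the unweighted tail
`P(V ≥ m + 1 - a)`. A path avoiding `[a, b]` must make such a jump from some `m ∈ (b, n]`; since
each state is visited at most once, a union bound over `m` gives the sum of tails of `V`. Finally
`V` has finite mean because `(k+1) g(k+1)` decreases by `(α-1) g(k+1)` at each step, so the tail
sums tend to `0` as `b - a → ∞`. -/

namespace BetaCoalescent

open Filter Topology Finset Function

variable {α : ℝ}

def gammaRatio (α : ℝ) (j : ℕ) : ℝ := Real.Gamma ((j : ℝ) + 1 - α) / Real.Gamma ((j : ℝ) + 1)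

lemma hasSum_sub_succ_of_antitone {f : ℕ → ℝ} {l : ℝ} (hf : Antitone f)
    (hl : Tendsto f atTop (𝓝 l)) : HasSum (fun n => f n - f (n + 1)) (f 0 - l) := by
  rw [hasSum_iff_tendsto_nat_of_nonneg fun n => sub_nonneg.mpr (hf n.le_succ)]
  simpa only [Finset.sum_range_sub'] using hl.const_sub (f 0)

section gammaRatio

variable {j : ℕ}

lemma gammaRatio_pos (hα : α < 2) (hj : 1 ≤ j) : 0 < gammaRatio α j := by
  have : (1 : ℝ) ≤ j := by exact_mod_cast hj
  exact div_pos (Real.Gamma_pos_of_pos (by linarith)) (Real.Gamma_pos_of_pos (by positivity))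

lemma gammaRatio_one (α : ℝ) : gammaRatio α 1 = Real.Gamma (2 - α) := by
  norm_num [gammaRatio, one_add_one_eq_two]

lemma succ_mul_gammaRatio_succ (hα : α < 2) (hj : 1 ≤ j) :
    ((j : ℝ) + 1) * gammaRatio α (j + 1) = ((j : ℝ) + 1 - α) * gammaRatio α j := by
  have : (1 : ℝ) ≤ j := by exact_mod_cast hj
  have hs : (j : ℝ) + 1 - α ≠ 0 := by linarith
  have hj1 : (j : ℝ) + 1 ≠ 0 := by positivity
  have hΓ : Real.Gamma ((j : ℝ) + 1) ≠ 0 := (Real.Gamma_pos_of_pos (by positivity)).ne'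
  simp only [gammaRatio, Nat.cast_succ]
  rw [show (j : ℝ) + 1 + 1 - α = (j + 1 - α) + 1 by ring, Real.Gamma_add_one hs,
    Real.Gamma_add_one hj1]
  field_simp

lemma gammaRatio_sub_succ (hα : α < 2) (hj : 1 ≤ j) :
    gammaRatio α j - gammaRatio α (j + 1)
      = α * (Real.Gamma ((j : ℝ) + 1 - α) / Real.Gamma ((j : ℝ) + 2)) := by
  have hj1 : (j : ℝ) + 1 ≠ 0 := by positivity
  have hrec := succ_mul_gammaRatio_succ hα hj
  have hΓ2 :
      Real.Gamma ((j : ℝ) + 1 - α) / Real.Gamma ((j : ℝ) + 2) = gammaRatio α j / (j + 1) := by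
    rw [gammaRatio, div_div, show (j : ℝ) + 2 = (j + 1) + 1 by ring, Real.Gamma_add_one hj1,
      mul_comm]
  rw [hΓ2]
  field_simp
  linear_combination -hrec

lemma gammaRatio_succ_le (hα0 : 0 < α) (hα : α < 2) (hj : 1 ≤ j) :
    gammaRatio α (j + 1) ≤ gammaRatio α j := by
  have : (1 : ℝ) ≤ j := by exact_mod_cast hj
  have hΓ : 0 < Real.Gamma ((j : ℝ) + 1 - α) / Real.Gamma ((j : ℝ) + 2) :=
    div_pos (Real.Gamma_pos_of_pos (by linarith)) (Real.Gamma_pos_of_pos (by positivity))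
  nlinarith [gammaRatio_sub_succ hα hj]

lemma summable_gammaRatio_succ (hα1 : 1 < α) (hα2 : α < 2) :
    Summable fun k : ℕ => gammaRatio α (k + 1) := by
  set H : ℕ → ℝ := fun k => ((k : ℝ) + 1) * gammaRatio α (k + 1)
  have hstep (k : ℕ) : H k - H (k + 1) = (α - 1) * gammaRatio α (k + 1) := by
    have := succ_mul_gammaRatio_succ hα2 (Nat.le_add_left 1 k)
    simp only [H, Nat.cast_succ] at this ⊢
    linear_combination -this
  refine summable_of_sum_range_le (c := H 0 / (α - 1))
    (fun k => (gammaRatio_pos hα2 (Nat.le_add_left 1 k)).le) fun N => ?_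
  have hsum := Finset.sum_range_sub' H N
  simp only [hstep, ← Finset.mul_sum] at hsum
  have hH : 0 ≤ H N := mul_nonneg (by positivity) (gammaRatio_pos hα2 (Nat.le_add_left 1 N)).le
  rw [le_div_iff₀ (by linarith)]
  linarith

lemma tendsto_gammaRatio_atTop (hα1 : 1 < α) (hα2 : α < 2) :
    Tendsto (gammaRatio α) atTop (𝓝 0) :=
  (tendsto_add_atTop_iff_nat 1).mp (summable_gammaRatio_succ hα1 hα2).tendsto_atTop_zero

lemma hasSum_Vge (hα1 : 1 < α) (hα2 : α < 2) (hj : 1 ≤ j) :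
    HasSum (fun i : ℕ => if j ≤ i ∧ 1 ≤ i then Vpmf α i else 0)
      (gammaRatio α j / Real.Gamma (2 - α)) := by
  have hVpmf (n : ℕ) : Vpmf α (n + j)
      = (gammaRatio α (n + j) - gammaRatio α (n + j + 1)) / Real.Gamma (2 - α) := by
    rw [gammaRatio_sub_succ hα2 (by omega), Vpmf]
    push_cast
    ring
  have hanti : Antitone fun n => gammaRatio α (n + j) :=
    antitone_nat_of_succ_le fun n => by
      simpa [add_right_comm] using gammaRatio_succ_le (by linarith) hα2 (by omega : 1 ≤ n + j)
  have hlim : Tendsto (fun n => gammaRatio α (n + j)) atTop (𝓝 0) :=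
    (tendsto_add_atTop_iff_nat j).mpr (tendsto_gammaRatio_atTop hα1 hα2)
  have htel := (hasSum_sub_succ_of_antitone hanti hlim).div_const (Real.Gamma (2 - α))
  refine (hasSum_nat_add_iff' j).mp ?_
  have hhead : ∑ i ∈ range j, (if j ≤ i ∧ 1 ≤ i then Vpmf α i else 0) = 0 :=
    Finset.sum_eq_zero fun i hi => if_neg fun h => by simp only [Finset.mem_range] at hi; omega
  rw [hhead, sub_zero]
  have hterm : (fun n => if j ≤ n + j ∧ 1 ≤ n + j then Vpmf α (n + j) else 0)
      = fun n => (gammaRatio α (n + j) - gammaRatio α (n + 1 + j)) / Real.Gamma (2 - α) := by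
    ext n
    rw [if_pos ⟨by omega, by omega⟩, hVpmf, add_right_comm]
  rw [hterm]
  simpa using htel

lemma Vge_eq (hα1 : 1 < α) (hα2 : α < 2) (hj : 1 ≤ j) :
    Vge α j = gammaRatio α j / Real.Gamma (2 - α) :=
  (hasSum_Vge hα1 hα2 hj).tsum_eq

end gammaRatio

lemma Vgt_eq (hα1 : 1 < α) (hα2 : α < 2) (k : ℕ) :
    Vgt α k = gammaRatio α (k + 1) / Real.Gamma (2 - α) :=
  Vge_eq hα1 hα2 (Nat.le_add_left 1 k)

lemma Vgt_nonneg (hα1 : 1 < α) (hα2 : α < 2) (k : ℕ) : 0 ≤ Vgt α k := by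
  rw [Vgt_eq hα1 hα2]
  exact div_nonneg (gammaRatio_pos hα2 (Nat.le_add_left 1 k)).le
    (Real.Gamma_pos_of_pos (by linarith)).le

lemma summable_Vgt (hα1 : 1 < α) (hα2 : α < 2) : Summable (Vgt α) :=
  ((summable_gammaRatio_succ hα1 hα2).div_const _).congr fun k => (Vgt_eq hα1 hα2 k).symm

/-- Reweighting `u` by `R`, smaller on `t` than on `s`, lowers the relative mass of `t`. -/
lemma sum_weighted_mul_sum_le {ι : Type*} {s t : Finset ι} {R u : ι → ℝ}
    (hus : ∀ i ∈ s, 0 ≤ u i) (hut : ∀ i ∈ t, 0 ≤ u i) (hR : ∀ i ∈ s, ∀ i' ∈ t, R i' ≤ R i) :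
    (∑ i' ∈ t, R i' * u i') * ∑ i ∈ s, u i ≤ (∑ i ∈ s, R i * u i) * ∑ i' ∈ t, u i' := by
  rw [Finset.sum_mul_sum, Finset.sum_mul_sum, Finset.sum_comm]
  refine Finset.sum_le_sum fun i hi => Finset.sum_le_sum fun i' hi' => ?_
  calc R i' * u i' * u i = R i' * (u i * u i') := by ring
    _ ≤ R i * (u i * u i') :=
      mul_le_mul_of_nonneg_right (hR i hi i' hi') (mul_nonneg (hus i hi) (hut i' hi'))
    _ = R i * u i * u i' := by ring

lemma sum_Ico_gammaRatio_sub_succ {p q : ℕ} (hpq : p ≤ q) :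
    ∑ i ∈ Ico p q, (gammaRatio α i - gammaRatio α (i + 1)) = gammaRatio α p - gammaRatio α q := by
  rw [← neg_sub, ← Finset.sum_Ico_sub _ hpq, ← Finset.sum_neg_distrib]
  simp only [neg_sub]

lemma collRate_pos (hα0 : 0 < α) (hα2 : α < 2) {m k : ℕ} (hk : 2 ≤ k) (hkm : k ≤ m) :
    0 < collRate α m k := by
  have hk' : (2 : ℝ) ≤ k := by exact_mod_cast hk
  have hkm' : (k : ℝ) ≤ m := by exact_mod_cast hkm
  have hΓ {x : ℝ} (hx : 0 < x) : 0 < Real.Gamma x := Real.Gamma_pos_of_pos hx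
  have hchoose : (0 : ℝ) < m.choose k := by exact_mod_cast Nat.choose_pos hkm
  unfold collRate betaR
  have := hΓ (x := 2 - α) (by linarith)
  have := hΓ hα0
  have := hΓ (x := (k : ℝ) - α) (by linarith)
  have := hΓ (x := (m : ℝ) - k + α) (by linarith)
  have := hΓ (x := (k : ℝ) - α + ((m : ℝ) - k + α)) (by linarith)
  positivity

/-- What remains of `ρ_{m,m-i}` after splitting off `Γ(i+1-α)/Γ(i+2) ∝ g i - g (i + 1)`. -/
def mergeFactor (α : ℝ) (m i : ℕ) : ℝ :=
  m.descFactorial (i + 1) * Real.Gamma ((m : ℝ) - (i + 1) + α)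
    / (α * Real.Gamma (2 - α) * Real.Gamma α * Real.Gamma m)

lemma collRate_succ_eq (hα0 : 0 < α) (hα2 : α < 2) {m i : ℕ} (hi : 1 ≤ i) :
    collRate α m (i + 1) = mergeFactor α m i * (gammaRatio α i - gammaRatio α (i + 1)) := by
  rw [gammaRatio_sub_succ hα2 hi]
  have hfac : (m.descFactorial (i + 1) : ℝ) = (i + 1).factorial * m.choose (i + 1) := by
    exact_mod_cast Nat.descFactorial_eq_factorial_mul_choose m (i + 1)
  have hΓfac : Real.Gamma ((i : ℝ) + 2) = (i + 1).factorial := by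
    rw [show (i : ℝ) + 2 = ((i + 1 : ℕ) : ℝ) + 1 by push_cast; ring, Real.Gamma_nat_eq_factorial]
  have hsum : ((i + 1 : ℕ) : ℝ) - α + ((m : ℝ) - ((i + 1 : ℕ) : ℝ) + α) = m := by ring
  have : (0 : ℝ) < (i + 1).factorial := by exact_mod_cast Nat.factorial_pos _
  have : 0 < Real.Gamma (2 - α) := Real.Gamma_pos_of_pos (by linarith)
  have : 0 < Real.Gamma α := Real.Gamma_pos_of_pos hα0
  simp only [collRate, betaR, mergeFactor, hsum, hfac, hΓfac]
  push_cast
  field_simp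

lemma mergeFactor_succ_le (hα1 : 1 ≤ α) (hα2 : α < 2) {m i : ℕ} (h : i + 2 ≤ m) :
    mergeFactor α m (i + 1) ≤ mergeFactor α m i := by
  have hm : (i : ℝ) + 2 ≤ m := by exact_mod_cast h
  have hx : 0 < (m : ℝ) - (i + 2) + α := by linarith
  have hrec : Real.Gamma ((m : ℝ) - (i + 1) + α)
      = ((m : ℝ) - (i + 2) + α) * Real.Gamma ((m : ℝ) - (i + 2) + α) := by
    rw [← Real.Gamma_add_one hx.ne']; ring_nf
  have hdesc : (m.descFactorial (i + 2) : ℝ) = ((m : ℝ) - (i + 1)) * m.descFactorial (i + 1) := by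
    rw [Nat.descFactorial_succ, Nat.cast_mul, Nat.cast_sub (by omega)]
    push_cast; ring
  unfold mergeFactor
  rw [hrec]
  push_cast
  rw [hdesc, show (m : ℝ) - (i + 1 + 1) + α = (m : ℝ) - (i + 2) + α by ring]
  have hden : 0 < α * Real.Gamma (2 - α) * Real.Gamma α * Real.Gamma m := by
    have := Real.Gamma_pos_of_pos (by linarith : (0 : ℝ) < 2 - α)
    have := Real.Gamma_pos_of_pos (by linarith : (0 : ℝ) < α)
    have := Real.Gamma_pos_of_pos (by linarith : (0 : ℝ) < m)
    positivity
  rw [div_le_div_iff_of_pos_right hden]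
  have : 0 ≤ (m.descFactorial (i + 1) : ℝ) * Real.Gamma ((m : ℝ) - (i + 2) + α) :=
    mul_nonneg (Nat.cast_nonneg _) (Real.Gamma_pos_of_pos hx).le
  nlinarith

lemma mergeFactor_le_of_le (hα1 : 1 ≤ α) (hα2 : α < 2) {m i i' : ℕ} (hii' : i ≤ i')
    (hi' : i' < m) : mergeFactor α m i' ≤ mergeFactor α m i := by
  induction i', hii' using Nat.le_induction with
  | base => exact le_rfl
  | succ k hk ih => exact (mergeFactor_succ_le hα1 hα2 (by omega)).trans (ih (by omega))

lemma rateML_zero (α : ℝ) (m : ℕ) : rateML α m 0 = 0 := by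
  simp [rateML, collRate]

/-- Merging into `l` blocks means `i = m - l` of the blocks disappear. -/
lemma sum_Ico_rateML {m a : ℕ} (ham : a ≤ m) :
    ∑ l ∈ Ico 1 a, rateML α m l = ∑ i ∈ Ico (m + 1 - a) m, collRate α m (i + 1) := by
  simpa only [rateML, Nat.add_sub_cancel] using
    Finset.sum_Ico_reflect (fun i => collRate α m (i + 1)) 1 (by omega : a ≤ m + 1)

lemma totalRate_eq_sum (α : ℝ) (m : ℕ) :
    totalRate α m = ∑ i ∈ Ico 1 m, collRate α m (i + 1) := by
  rw [totalRate]
  simpa only [Nat.add_sub_cancel_left] using sum_Ico_rateML (α := α) (le_refl m)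

lemma sum_collRate_pos (hα0 : 0 < α) (hα2 : α < 2) {m p q : ℕ} (hp : 1 ≤ p) (hpq : p < q)
    (hqm : q ≤ m) : 0 < ∑ i ∈ Ico p q, collRate α m (i + 1) :=
  Finset.sum_pos (fun i hi => have := mem_Ico.mp hi; collRate_pos hα0 hα2 (by omega) (by omega))
    ⟨p, by simp [hpq]⟩

lemma jumpProb_nonneg (hα0 : 0 < α) (hα2 : α < 2) {m l : ℕ} (hlm : l < m) :
    0 ≤ jumpProb α m l := by
  rcases Nat.eq_zero_or_pos l with rfl | hl
  · simp [jumpProb, rateML_zero]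
  · refine div_nonneg (collRate_pos hα0 hα2 (by omega) (by omega)).le ?_
    rw [totalRate_eq_sum]
    exact (sum_collRate_pos hα0 hα2 le_rfl (by omega) le_rfl).le

/-- The jump law is the law of the telescoping weights `g i - g (i + 1)` reweighted by the
nonincreasing `mergeFactor`, which can only make its upper tail lighter. -/
lemma sum_jumpProb_le_Vge (hα1 : 1 < α) (hα2 : α < 2) {m a : ℕ} (ha : 2 ≤ a) (ham : a < m) :
    ∑ l ∈ range a, jumpProb α m l ≤ Vge α (m + 1 - a) := by
  set j := m + 1 - a
  have hα0 : 0 < α := by linarith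
  set u : ℕ → ℝ := fun i => gammaRatio α i - gammaRatio α (i + 1)
  set A := ∑ i ∈ Ico 1 j, collRate α m (i + 1)
  set B := ∑ i ∈ Ico j m, collRate α m (i + 1)
  have hA : 0 < A := sum_collRate_pos hα0 hα2 le_rfl (by omega) (by omega)
  have hB : 0 < B := sum_collRate_pos hα0 hα2 (by omega) (by omega) le_rfl
  have hprob : ∑ l ∈ range a, jumpProb α m l = B / (A + B) := by
    simp only [jumpProb]
    rw [← Finset.sum_div, Finset.sum_range_eq_add_Ico _ (by omega), rateML_zero, zero_add,
      sum_Ico_rateML ham.le, totalRate_eq_sum, ← Finset.sum_Ico_consecutive _ (by omega : 1 ≤ j)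
      (by omega : j ≤ m)]
  have hu {i p q : ℕ} (hi : i ∈ Ico p q) (hp : 1 ≤ p) : 0 ≤ u i :=
    sub_nonneg.mpr (gammaRatio_succ_le hα0 hα2 (hp.trans (mem_Ico.mp hi).1))
  have hrate {p q : ℕ} (hp : 1 ≤ p) :
      ∑ i ∈ Ico p q, collRate α m (i + 1) = ∑ i ∈ Ico p q, mergeFactor α m i * u i :=
    Finset.sum_congr rfl fun i hi => collRate_succ_eq hα0 hα2 (hp.trans (mem_Ico.mp hi).1)
  have hcheb : B * (gammaRatio α 1 - gammaRatio α j) ≤ A * (gammaRatio α j - gammaRatio α m) := by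
    have := sum_weighted_mul_sum_le (s := Ico 1 j) (t := Ico j m) (R := mergeFactor α m)
      (fun i hi => hu hi le_rfl) (fun i hi => hu hi (by omega)) fun i hi i' hi' =>
        have := mem_Ico.mp hi; have := mem_Ico.mp hi'
        mergeFactor_le_of_le hα1.le hα2 (by omega) (by omega)
    rwa [sum_Ico_gammaRatio_sub_succ (by omega), sum_Ico_gammaRatio_sub_succ (by omega),
      ← hrate le_rfl, ← hrate (by omega)] at this
  have hgm := gammaRatio_pos hα2 (by omega : 1 ≤ m)
  have hg1 := gammaRatio_pos hα2 le_rfl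
  rw [hprob, Vge_eq hα1 hα2 (by omega), ← gammaRatio_one, div_le_div_iff₀ (by positivity) hg1]
  nlinarith [mul_pos hA hgm]

structure IsBlockPath (x : ℕ → ℕ) : Prop where
  one_le : ∀ i, 1 ≤ x i
  lt_of_one_lt : ∀ i, 1 < x i → x (i + 1) < x i
  eq_one : ∀ i, x i = 1 → x (i + 1) = 1

namespace IsBlockPath

variable {x : ℕ → ℕ}

lemma antitone (hx : IsBlockPath x) : Antitone x :=
  antitone_nat_of_succ_le fun i => by
    rcases (hx.one_le i).lt_or_eq with h | h
    · exact (hx.lt_of_one_lt i h).le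
    · rw [hx.eq_one i h.symm, h]

lemma lt_of_lt (hx : IsBlockPath x) {i j : ℕ} (hij : i < j) (h : 1 < x i) : x j < x i :=
  (hx.antitone hij).trans_lt (hx.lt_of_one_lt i h)

lemma eq_of_apply_eq (hx : IsBlockPath x) {i j m : ℕ} (hm : 1 < m) (hi : x i = m)
    (hj : x j = m) : i = j := by
  by_contra hij
  rcases Nat.lt_or_gt_of_ne hij with h | h
  · exact (hx.lt_of_lt h (hi ▸ hm)).ne (hj.trans hi.symm)
  · exact (hx.lt_of_lt h (hj ▸ hm)).ne (hi.trans hj.symm)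

/-- Every step above `1` loses at least one block, so the path is absorbed by time `x 0`. -/
lemma apply_apply_zero_eq_one (hx : IsBlockPath x) : x (x 0) = 1 := by
  have key : ∀ i, x i = 1 ∨ x i + i ≤ x 0 := by
    intro i
    induction i with
    | zero => simp
    | succ k ih =>
      rcases (hx.one_le k).lt_or_eq with h | h
      · have := hx.lt_of_one_lt k h
        omega
      · exact .inl (hx.eq_one k h.symm)
  have := hx.one_le (x 0)
  have := key (x 0)
  omega

end IsBlockPath

lemma exists_jump_over {x : ℕ → ℕ} (hx : Antitone x) {a b N : ℕ} (ha : a ≤ x 0) (hN : x N < a)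
    (havoid : ∀ i, x i ∉ Set.Icc a b) : ∃ i, (b < x i ∧ x i ≤ x 0) ∧ x (i + 1) < a := by
  have hex : ∃ i, x (i + 1) < a := ⟨N, (hx N.le_succ).trans_lt hN⟩
  refine ⟨Nat.find hex, ⟨?_, hx (Nat.zero_le _)⟩, Nat.find_spec hex⟩
  have hle : a ≤ x (Nat.find hex) := by
    rcases Nat.eq_zero_or_pos (Nat.find hex) with h | h
    · rwa [h]
    · have := Nat.find_min hex (Nat.sub_one_lt_of_lt h)
      rwa [Nat.sub_add_cancel h, not_lt] at this
  by_contra hb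
  exact havoid _ ⟨hle, not_lt.mp hb⟩

lemma measure_iUnion_inter_eq_mul {Ω ι : Type*} [MeasurableSpace Ω] [Countable ι]
    {μ : Measure Ω} {P : ι → Set Ω} (hdisj : Pairwise (Disjoint on P))
    (hmeas : ∀ g, MeasurableSet (P g)) {E : Set Ω} (hE : MeasurableSet E) {c : ℝ≥0∞}
    (h : ∀ g, μ (P g ∩ E) = c * μ (P g)) : μ ((⋃ g, P g) ∩ E) = c * μ (⋃ g, P g) := by
  have hdisjE : Pairwise (Disjoint on fun g => P g ∩ E) :=
    fun g g' hg => (hdisj hg).mono Set.inter_subset_left Set.inter_subset_left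
  rw [Set.iUnion_inter, measure_iUnion hdisjE (fun g => (hmeas g).inter hE),
    measure_iUnion hdisj hmeas, ← ENNReal.tsum_mul_left]
  exact tsum_congr h

end BetaCoalescent

namespace IsJumpChain

open BetaCoalescent Finset Function

variable {α : ℝ} {Ω : Type*} [MeasurableSpace Ω] {μ : Measure Ω} {n : ℕ} {X : ℕ → Ω → ℕ}

lemma ae_isBlockPath (hX : IsJumpChain α μ n X) :
    ∀ᵐ ω ∂μ, X 0 ω = n ∧ IsBlockPath (X · ω) := by
  filter_upwards [hX.init, hX.pos, hX.step] with ω h0 hpos hstep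
  exact ⟨h0, hpos, fun i => (hstep i).1, fun i => (hstep i).2⟩

/-- The Markov property for the last state only, obtained by summing the defining property over
all histories ending in `m`. -/
lemma measure_eq_and_eq (hX : IsJumpChain α μ n X) {m : ℕ} (hm : 1 < m) (i l : ℕ) :
    μ {ω | X i ω = m ∧ X (i + 1) ω = l}
      = ENNReal.ofReal (jumpProb α m l) * μ {ω | X i ω = m} := by
  let hist : (Fin i → ℕ) → ℕ → ℕ := fun g j => if h : j < i then g ⟨j, h⟩ else m
  let P : (Fin i → ℕ) → Set Ω := fun g => {ω | ∀ j ≤ i, X j ω = hist g j}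
  have hist_self (g : Fin i → ℕ) : hist g i = m := dif_neg (lt_irrefl i)
  have hUnion : ⋃ g, P g = {ω | X i ω = m} := by
    ext ω
    simp only [Set.mem_iUnion, Set.mem_ofPred_eq, P]
    refine ⟨fun ⟨g, hg⟩ => hist_self g ▸ hg i le_rfl, fun hω => ⟨fun j => X j ω, fun j hj => ?_⟩⟩
    rcases hj.lt_or_eq with h | h
    · simp [hist, h]
    · rw [h]
      exact hω.trans (hist_self (fun j => X j ω)).symm
  have hdisj : Pairwise (Disjoint on P) := by
    refine fun g g' hne => Set.disjoint_left.mpr fun ω hg hg' => hne (funext fun j => ?_)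
    have h := hg j j.2.le
    have h' := hg' j j.2.le
    simp only [hist, dif_pos j.2] at h h'
    exact h.symm.trans h'
  have hmeas (g : Fin i → ℕ) : MeasurableSet (P g) := by
    simp only [P, Set.ofPred_forall]
    exact .iInter fun j => .iInter fun _ => hX.meas j (measurableSet_singleton _)
  have hstep (g : Fin i → ℕ) :
      μ (P g ∩ {ω | X (i + 1) ω = l}) = ENNReal.ofReal (jumpProb α m l) * μ (P g) := by
    have := hX.markov i (hist g) (hist_self g ▸ hm) l
    rwa [hist_self] at this
  have hE : {ω | X i ω = m ∧ X (i + 1) ω = l} = (⋃ g, P g) ∩ {ω | X (i + 1) ω = l} := by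
    rw [hUnion]; rfl
  have hmeasE : MeasurableSet {ω | X (i + 1) ω = l} := hX.meas (i + 1) (measurableSet_singleton l)
  rw [hE, measure_iUnion_inter_eq_mul hdisj hmeas hmeasE hstep, hUnion]

lemma tsum_measure_eq_le_one [IsProbabilityMeasure μ] (hX : IsJumpChain α μ n X) {m : ℕ}
    (hm : 1 < m) : ∑' i, μ {ω | X i ω = m} ≤ 1 := by
  refine (tsum_measure_le_measure_univ
    (fun i => (hX.meas i (measurableSet_singleton m)).nullMeasurableSet) fun i j hij => ?_).trans
    measure_univ.le
  change μ ({ω | X i ω = m} ∩ {ω | X j ω = m}) = 0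
  rw [measure_eq_zero_iff_ae_notMem]
  filter_upwards [hX.ae_isBlockPath] with ω ⟨_, hpath⟩ ⟨hi, hj⟩
  exact hij (hpath.eq_of_apply_eq hm hi hj)

/-- Since `m` is visited at most once, the chance of ever jumping from `m` below `a` is at most
the one-step chance. -/
lemma measure_jump_below_le [IsProbabilityMeasure μ] (hα1 : 1 < α) (hα2 : α < 2)
    (hX : IsJumpChain α μ n X) {m a : ℕ} (ha : 2 ≤ a) (ham : a < m) :
    μ (⋃ i, {ω | X i ω = m ∧ X (i + 1) ω < a}) ≤ ENNReal.ofReal (Vge α (m + 1 - a)) := by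
  set q := ∑ l ∈ range a, ENNReal.ofReal (jumpProb α m l) with hq_def
  have hstep (i : ℕ) : μ {ω | X i ω = m ∧ X (i + 1) ω < a} ≤ q * μ {ω | X i ω = m} := by
    have hsplit : {ω | X i ω = m ∧ X (i + 1) ω < a}
        = ⋃ l ∈ range a, {ω | X i ω = m ∧ X (i + 1) ω = l} := by
      ext ω; simp
    rw [hsplit, Finset.sum_mul]
    refine (measure_biUnion_finset_le _ _).trans_eq (Finset.sum_congr rfl fun l _ => ?_)
    exact hX.measure_eq_and_eq (by omega) i l
  have hq : q ≤ ENNReal.ofReal (Vge α (m + 1 - a)) := by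
    rw [hq_def, ← ENNReal.ofReal_sum_of_nonneg fun l hl =>
      jumpProb_nonneg (by linarith) hα2 ((Finset.mem_range.mp hl).trans ham)]
    exact ENNReal.ofReal_le_ofReal (sum_jumpProb_le_Vge hα1 hα2 ha ham)
  calc μ (⋃ i, {ω | X i ω = m ∧ X (i + 1) ω < a})
      ≤ ∑' i, μ {ω | X i ω = m ∧ X (i + 1) ω < a} := measure_iUnion_le _
    _ ≤ ∑' i, q * μ {ω | X i ω = m} := ENNReal.tsum_le_tsum hstep
    _ = q * ∑' i, μ {ω | X i ω = m} := ENNReal.tsum_mul_left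
    _ ≤ q := mul_le_of_le_one_right' (hX.tsum_measure_eq_le_one (by omega))
    _ ≤ _ := hq

/-- To avoid `[a, b]` the chain has to jump from some `m = b + 1 + k ≤ n` to below `a`. -/
lemma measure_avoid_le [IsProbabilityMeasure μ] (hα1 : 1 < α) (hα2 : α < 2)
    (hX : IsJumpChain α μ n X) {a b : ℕ} (ha : 2 ≤ a) (hab : a ≤ b) (hbn : b < n) :
    μ {ω | ∀ i, X i ω ∉ Set.Icc a b}
      ≤ ENNReal.ofReal (∑' k : ℕ, Vgt α (b - a + (k + 1))) := by
  have hcover : {ω | ∀ i, X i ω ∉ Set.Icc a b}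
      ≤ᵐ[μ] ⋃ k ∈ range (n - b), ⋃ i, {ω | X i ω = b + 1 + k ∧ X (i + 1) ω < a} := by
    filter_upwards [hX.ae_isBlockPath] with ω ⟨h0, hpath⟩ (havoid : ∀ i, X i ω ∉ Set.Icc a b)
    show ω ∈ ⋃ k ∈ range (n - b), ⋃ i, {ω | X i ω = b + 1 + k ∧ X (i + 1) ω < a}
    obtain ⟨i, ⟨hb, hn⟩, hjump⟩ := exists_jump_over hpath.antitone (by omega)
      (by rw [hpath.apply_apply_zero_eq_one]; omega) havoid
    simp only [Set.mem_iUnion, Finset.mem_range]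
    exact ⟨X i ω - (b + 1), by omega, i, by omega, hjump⟩
  have hsum : Summable fun k => Vgt α (b - a + (k + 1)) := by
    simpa only [add_comm, add_left_comm] using
      (summable_nat_add_iff (b - a + 1)).mpr (summable_Vgt hα1 hα2)
  calc μ {ω | ∀ i, X i ω ∉ Set.Icc a b}
      ≤ ∑ k ∈ range (n - b), μ (⋃ i, {ω | X i ω = b + 1 + k ∧ X (i + 1) ω < a}) :=
        (measure_mono_ae hcover).trans (measure_biUnion_finset_le _ _)
    _ ≤ ∑ k ∈ range (n - b), ENNReal.ofReal (Vgt α (b - a + (k + 1))) :=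
        Finset.sum_le_sum fun k _ => (hX.measure_jump_below_le hα1 hα2 ha (by omega)).trans_eq
          (by rw [Vgt, show b + 1 + k + 1 - a = b - a + (k + 1) + 1 by omega])
    _ = ENNReal.ofReal (∑ k ∈ range (n - b), Vgt α (b - a + (k + 1))) :=
        (ENNReal.ofReal_sum_of_nonneg fun k _ => Vgt_nonneg hα1 hα2 _).symm
    _ ≤ _ := ENNReal.ofReal_le_ofReal (hsum.sum_le_tsum _ fun k _ => Vgt_nonneg hα1 hα2 _)

end IsJumpChain

/-- For the block-counting jump chain started from `n` and integers
`2 ≤ a < b < n`, the probability that no `X_i` lies in `[a,b]` is at most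
`∑_{k=1}^∞ P(V > b-a+k)`; consequently, for every `ε > 0` there is `r` such that for every
chain and every interval `[a,b] ⊆ [2,n-1]` with `b - a ≥ r` this probability is at most
`ε`. -/
theorem avoid_interval (α : ℝ) (hα1 : 1 < α) (hα2 : α < 2) :
    (∀ (Ω : Type) (_ : MeasurableSpace Ω) (μ : Measure Ω), IsProbabilityMeasure μ →
      ∀ (n : ℕ) (X : ℕ → Ω → ℕ), IsJumpChain α μ n X →
      ∀ a b : ℕ, 2 ≤ a → a < b → b < n →
        μ {ω | ∀ i, X i ω ∉ Set.Icc a b}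
          ≤ ENNReal.ofReal (∑' k : ℕ, Vgt α (b - a + (k + 1)))) ∧
    (∀ ε : ℝ, 0 < ε → ∃ r : ℕ,
      ∀ (Ω : Type) (_ : MeasurableSpace Ω) (μ : Measure Ω), IsProbabilityMeasure μ →
      ∀ (n : ℕ) (X : ℕ → Ω → ℕ), IsJumpChain α μ n X →
      ∀ a b : ℕ, 2 ≤ a → a < b → b < n → r ≤ b - a →
        μ {ω | ∀ i, X i ω ∉ Set.Icc a b} ≤ ENNReal.ofReal ε) := by
  refine ⟨fun Ω _ μ _ n X hX a b ha hab hbn => hX.measure_avoid_le hα1 hα2 ha hab.le hbn,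
    fun ε hε => ?_⟩
  have htail : Filter.Tendsto (fun d => ∑' k : ℕ, Vgt α (d + (k + 1))) Filter.atTop (nhds 0) := by
    simpa only [add_comm, add_left_comm] using
      (Filter.tendsto_add_atTop_iff_nat 1).mpr (tendsto_sum_nat_add (Vgt α))
  obtain ⟨r, hr⟩ := Filter.eventually_atTop.mp (htail.eventually (Iic_mem_nhds hε))
  exact ⟨r, fun Ω _ μ _ n X hX a b ha hab hbn hr' =>
    (hX.measure_avoid_le hα1 hα2 ha hab.le hbn).trans (ENNReal.ofReal_le_ofReal (hr _ hr'))⟩
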